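/- Let x be a circular string of length G over {A,C,G,T} with f_A occurrences of the letter A, and let y be obtained from x by the random substitution process with rate p, with f'_A occurrences of A in y. Suppose G ≠ 4·f_A and let p̂ = 3·(f'_A − f_A)/(G − 4·f_A). Then for every ε > 0 and p > 0, Pr(|p̂ − p| ≥ ε·p) ≤ 2·exp(−(32/9)·G·|f_A/G − 1/4|²·p²·ε²). -/

import Mathlib

open MeasureTheory

noncomputable section

/-- Substitution kernel weight: probability that letter `a` becomes letter `b`
under the rate-`q` substitution process. -/
def substW (q : ℝ) (a b : Fin 4) : ℝ := if b = a then 1 - q else q / 3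

/-- The discrete measure on a finite type with weight function `w`. -/
def discMeasure {α : Type*} [Fintype α] [MeasurableSpace α] (w : α → ℝ) : Measure α :=
  ∑ a : α, ENNReal.ofReal (w a) • Measure.dirac a

/-- Weight of outcome `y` for the rate-`p` substitution process applied to `x`. -/
def mutateW {G : ℕ} (p : ℝ) (x y : Fin G → Fin 4) : ℝ := ∏ i, substW p (x i) (y i)

/-- Distribution of the string obtained from `x` by the random substitution
process with rate `p`: i.i.d. substitutions at every position. -/
def mutate {G : ℕ} (p : ℝ) (x : Fin G → Fin 4) : Measure (Fin G → Fin 4) :=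
  discMeasure (mutateW p x)

/-- Number of occurrences of the letter `a` in the string `z`. -/
def countLetter {G : ℕ} (z : Fin G → Fin 4) (a : Fin 4) : ℕ :=
  (Finset.univ.filter fun i => z i = a).card

/-!
The count `f'_A` is a sum of `G` independent Bernoulli variables, one per position, and its
mean is `f_A + p (G - 4 f_A) / 3`, so `p̂ - p = 3 (f'_A - 𝔼 f'_A) / (G - 4 f_A)`. Hoeffding's
inequality for `[0, 1]`-valued summands bounds `Pr(|f'_A - 𝔼 f'_A| ≥ t)` by `2 exp(-2 t² / G)`;
take `t = ε p |G - 4 f_A| / 3`.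
-/

open ProbabilityTheory Real

section Hoeffding

variable {Ω ι : Type*} [MeasurableSpace Ω] {μ : Measure Ω} [IsProbabilityMeasure μ] [Fintype ι]
  {X : ι → Ω → ℝ}

theorem measureReal_le_abs_sum_sub_integral_le (h_indep : iIndepFun X μ)
    (hm : ∀ i, Measurable (X i)) (hX : ∀ i ω, X i ω ∈ Set.Icc 0 1) {ε : ℝ} (hε : 0 ≤ ε) :
    μ.real {ω | ε ≤ |∑ i, (X i ω - μ[X i])|}
      ≤ 2 * exp (-2 * ε ^ 2 / Fintype.card ι) := by
  have hsubG : ∀ i, HasSubgaussianMGF (fun ω ↦ X i ω - μ[X i]) (1 / 4) μ := fun i ↦ by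
    convert hasSubgaussianMGF_of_mem_Icc (hm i).aemeasurable (ae_of_all μ (hX i))
    norm_num
  have hY := h_indep.comp (fun i t ↦ t - μ[X i]) fun i ↦ measurable_id.sub_const _
  have hupper := HasSubgaussianMGF.measure_sum_ge_le_of_iIndepFun hY (s := .univ)
    (fun i _ ↦ hsubG i) hε
  have hlower := HasSubgaussianMGF.measure_sum_ge_le_of_iIndepFun
    (hY.comp (fun _ t ↦ -t) fun _ ↦ measurable_neg) (s := .univ) (fun i _ ↦ (hsubG i).neg) hε
  have hexp : -ε ^ 2 / (2 * ((∑ _i : ι, (1 / 4 : NNReal) : NNReal) : ℝ))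
      = -2 * ε ^ 2 / Fintype.card ι := by
    push_cast
    simp only [Finset.sum_const, Finset.card_univ, nsmul_eq_mul]
    ring
  simp only [hexp, Function.comp_apply] at hupper hlower
  calc μ.real {ω | ε ≤ |∑ i, (X i ω - μ[X i])|}
      ≤ μ.real ({ω | ε ≤ ∑ i, (X i ω - μ[X i])} ∪ {ω | ε ≤ ∑ i, -(X i ω - μ[X i])}) := by
        refine measureReal_mono fun ω (hω : ε ≤ |_|) ↦ ?_
        rw [Set.mem_union, Set.mem_ofPred, Set.mem_ofPred, Finset.sum_neg_distrib]
        exact le_abs.mp hω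
    _ ≤ _ := measureReal_union_le _ _
    _ ≤ 2 * exp (-2 * ε ^ 2 / Fintype.card ι) := by linarith

end Hoeffding

section DiscMeasure

variable {α : Type*} [Fintype α] [MeasurableSpace α]

lemma discMeasure_singleton [MeasurableSingletonClass α] (w : α → ℝ) (a : α) :
    discMeasure w {a} = ENNReal.ofReal (w a) := by
  classical
  simp [discMeasure, Pi.single_apply]

instance (w : α → ℝ) : IsFiniteMeasure (discMeasure w) :=
  ⟨by simp [discMeasure, ENNReal.sum_lt_top]⟩

lemma isProbabilityMeasure_discMeasure {w : α → ℝ} (hw : ∀ a, 0 ≤ w a) (h1 : ∑ a, w a = 1) :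
    IsProbabilityMeasure (discMeasure w) :=
  ⟨by simp [discMeasure, ← ENNReal.ofReal_sum_of_nonneg fun a _ ↦ hw a, h1]⟩

lemma integral_discMeasure [MeasurableSingletonClass α] {w : α → ℝ} (hw : ∀ a, 0 ≤ w a)
    (f : α → ℝ) : ∫ a, f a ∂discMeasure w = ∑ a, w a * f a := by
  simp [integral_fintype (Integrable.of_finite), measureReal_def, discMeasure_singleton, hw]

end DiscMeasure

section Substitution

variable {p : ℝ}

lemma substW_nonneg (hp0 : 0 ≤ p) (hp1 : p ≤ 1) (a b : Fin 4) : 0 ≤ substW p a b := by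
  unfold substW
  split_ifs <;> linarith

lemma sum_substW (p : ℝ) (a : Fin 4) : ∑ b, substW p a b = 1 := by
  fin_cases a <;> simp [substW, Fin.sum_univ_four] <;> ring

lemma isProbabilityMeasure_discMeasure_substW (hp0 : 0 ≤ p) (hp1 : p ≤ 1) (a : Fin 4) :
    IsProbabilityMeasure (discMeasure (substW p a)) :=
  isProbabilityMeasure_discMeasure (substW_nonneg hp0 hp1 a) (sum_substW p a)

lemma integral_indicator_discMeasure_substW (hp0 : 0 ≤ p) (hp1 : p ≤ 1) (a c : Fin 4) :
    ∫ b, (if b = c then 1 else 0 : ℝ) ∂discMeasure (substW p a) = substW p a c := by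
  simp [integral_discMeasure (substW_nonneg hp0 hp1 a)]

lemma mutate_eq_pi (hp0 : 0 ≤ p) (hp1 : p ≤ 1) {G : ℕ} (x : Fin G → Fin 4) :
    mutate p x = Measure.pi fun i ↦ discMeasure (substW p (x i)) := by
  have := fun i ↦ isProbabilityMeasure_discMeasure_substW hp0 hp1 (x i)
  refine Measure.ext_of_singleton fun y ↦ ?_
  rw [mutate, discMeasure_singleton, Measure.pi_singleton, mutateW,
    ENNReal.ofReal_prod_of_nonneg fun i _ ↦ substW_nonneg hp0 hp1 _ _]
  simp only [discMeasure_singleton]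

instance {G : ℕ} (x : Fin G → Fin 4) : IsFiniteMeasure (mutate p x) :=
  inferInstanceAs (IsFiniteMeasure (discMeasure _))

lemma sum_substW_eq_countLetter_add {G : ℕ} (p : ℝ) (x : Fin G → Fin 4) (c : Fin 4) :
    ∑ i, substW p (x i) c
      = (countLetter x c : ℝ) + p * ((G : ℝ) - 4 * (countLetter x c : ℝ)) / 3 := by
  have hsplit : ∀ a, substW p a c = p / 3 + (1 - 4 * p / 3) * (if a = c then 1 else 0) := by
    intro a
    rcases eq_or_ne a c with rfl | h
    · simp only [substW, if_true]; ring
    · simp only [substW, Ne.symm h, h, if_false]; ring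
  simp only [hsplit, Finset.sum_add_distrib, ← Finset.mul_sum, countLetter,
    Finset.natCast_card_filter]
  simp only [Finset.sum_const, Finset.card_univ, Fintype.card_fin, nsmul_eq_mul]
  ring

end Substitution

theorem measureReal_mutate_le_abs_countLetter_sub_le {G : ℕ} {p : ℝ} (hp0 : 0 ≤ p) (hp1 : p ≤ 1)
    (x : Fin G → Fin 4) (c : Fin 4) {t : ℝ} (ht : 0 ≤ t) :
    (mutate p x).real {y | t ≤ |(countLetter y c : ℝ) - ∑ i, substW p (x i) c|}
      ≤ 2 * exp (-2 * t ^ 2 / G) := by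
  have := fun i ↦ isProbabilityMeasure_discMeasure_substW hp0 hp1 (x i)
  let ν := Measure.pi fun i ↦ discMeasure (substW p (x i))
  let isC : Fin 4 → ℝ := fun b ↦ if b = c then 1 else 0
  have hindep : iIndepFun (fun i y ↦ isC (y i)) ν := iIndepFun_pi fun _ ↦ .of_discrete
  have hmean (i : Fin G) : ν[fun y ↦ isC (y i)] = substW p (x i) c :=
    (integral_comp_eval .of_discrete).trans (integral_indicator_discMeasure_substW hp0 hp1 _ _)
  have hcount (y : Fin G → Fin 4) : (countLetter y c : ℝ) - ∑ i, substW p (x i) c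
      = ∑ i, (isC (y i) - ν[fun y ↦ isC (y i)]) := by
    simp only [hmean, Finset.sum_sub_distrib, countLetter, Finset.natCast_card_filter, isC]
  simpa only [mutate_eq_pi hp0 hp1, hcount, Fintype.card_fin] using
    measureReal_le_abs_sum_sub_integral_le hindep (fun _ ↦ .of_discrete)
      (fun _ _ ↦ by dsimp only [isC]; split_ifs <;> simp) ht

lemma le_abs_sub_of_le_abs_estimator_sub {S f d p ε : ℝ} (h : ε * p ≤ |3 * (S - f) / d - p|) :
    ε * p * |d| / 3 ≤ |S - (f + p * d / 3)| := by
  rcases eq_or_ne d 0 with rfl | hd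
  · simp
  have hd' : 0 < |d| := abs_pos.mpr hd
  have hrewrite : 3 * (S - f) / d - p = 3 * (S - (f + p * d / 3)) / d := by
    field_simp
    ring
  rw [hrewrite, abs_div, abs_mul, abs_of_pos three_pos, le_div_iff₀ hd'] at h
  linarith

lemma hoeffding_exponent_eq (G : ℕ) (f p ε : ℝ) :
    -2 * (ε * p * |(G : ℝ) - 4 * f| / 3) ^ 2 / G
      = -(32 / 9) * (G : ℝ) * |f / G - 1 / 4| ^ 2 * p ^ 2 * ε ^ 2 := by
  rcases eq_or_ne (G : ℝ) 0 with hG | hG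
  · simp [hG]
  simp only [div_pow, mul_pow, sq_abs]
  field_simp
  ring

theorem estimator_concentration_general {G : ℕ} (x : Fin G → Fin 4) (p : ℝ) (hp0 : 0 < p)
    (hp1 : p ≤ 1) (ε : ℝ) (hε : 0 < ε) :
    mutate p x {y | ε * p ≤
        |3 * ((countLetter y 0 : ℝ) - (countLetter x 0 : ℝ))
          / ((G : ℝ) - 4 * (countLetter x 0 : ℝ)) - p|}
      ≤ ENNReal.ofReal (2 * Real.exp (-(32 / 9) * (G : ℝ)
          * |(countLetter x 0 : ℝ) / (G : ℝ) - 1 / 4| ^ 2 * p ^ 2 * ε ^ 2)) := by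
  rw [← ofReal_measureReal, ← hoeffding_exponent_eq]
  refine ENNReal.ofReal_le_ofReal (le_trans (measureReal_mono fun y hy ↦ ?_)
    (measureReal_mutate_le_abs_countLetter_sub_le hp0.le hp1 x 0 (by positivity)))
  rw [Set.mem_ofPred, sum_substW_eq_countLetter_add]
  exact le_abs_sub_of_le_abs_estimator_sub hy

/-- Concentration (Hoeffding) bound for the estimator
`p̂ = 3·(f'_A − f_A)/(G − 4·f_A)`:
`Pr(|p̂ − p| ≥ ε·p) ≤ 2·exp(−(32/9)·G·|f_A/G − 1/4|²·p²·ε²)`. -/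
theorem estimator_concentration {G : ℕ} (x : Fin G → Fin 4) (p : ℝ) (hp0 : 0 < p)
    (hp1 : p ≤ 1) (ε : ℝ) (hε : 0 < ε)
    (hG4 : (G : ℝ) ≠ 4 * (countLetter x 0 : ℝ)) :
    mutate p x {y | ε * p ≤
        |3 * ((countLetter y 0 : ℝ) - (countLetter x 0 : ℝ))
          / ((G : ℝ) - 4 * (countLetter x 0 : ℝ)) - p|}
      ≤ ENNReal.ofReal (2 * Real.exp (-(32 / 9) * (G : ℝ)
          * |(countLetter x 0 : ℝ) / (G : ℝ) - 1 / 4| ^ 2 * p ^ 2 * ε ^ 2)) :=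
  estimator_concentration_general x p hp0 hp1 ε hε

end
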